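/- Let g : ℝ² → ℝ be continuously differentiable and assume that ∇g(x) ≠ 0 for every x with g(x) = 0. Then the topological frontier of Ω_g = interior {x ∈ ℝ² : g(x) ≤ 0} equals the zero level set {x ∈ ℝ² : g(x) = 0}. -/

import Mathlib

/-! A zero `x` of `g` lying in `interior {g ≤ 0}` is a local maximum of `g`, and one lying outside
`closure {g < 0}` is a local minimum; at either, Fermat's theorem forces `∇g x = 0`. Hence, when `∇g`
does not vanish on the zero level, `interior {g ≤ 0} = {g < 0}` and `closure {g < 0} = {g ≤ 0}`, and the
frontier of the open set `{g < 0}` is `{g ≤ 0} \ {g < 0} = {g = 0}`. -/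

open Filter Topology Set

section NoncriticalZeros

variable {E : Type*} [NormedAddCommGroup E] [NormedSpace ℝ E] {f : E → ℝ}

theorem interior_setOf_nonpos_eq (hf : Continuous f)
    (hcrit : ∀ x, f x = 0 → fderiv ℝ f x ≠ 0) :
    interior {x | f x ≤ 0} = {x | f x < 0} := by
  refine Subset.antisymm (fun x hx => ?_)
    (interior_maximal (fun _ hx => le_of_lt (α := ℝ) hx) (isOpen_lt hf continuous_const))
  have hle : f x ≤ 0 := (interior_subset hx : x ∈ {x | f x ≤ 0})
  refine hle.lt_of_ne fun h0 => hcrit x h0 ?_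
  have hmax : IsLocalMax f x := by
    filter_upwards [mem_interior_iff_mem_nhds.mp hx] with y hy
    exact h0 ▸ hy
  exact hmax.fderiv_eq_zero

theorem closure_setOf_neg_eq (hf : Continuous f)
    (hcrit : ∀ x, f x = 0 → fderiv ℝ f x ≠ 0) :
    closure {x | f x < 0} = {x | f x ≤ 0} := by
  refine Subset.antisymm (closure_lt_subset_le hf continuous_const) fun x (hle : f x ≤ 0) => ?_
  by_contra hx
  have h0 : f x = 0 := le_antisymm hle <| not_lt.mp fun hlt => hx (subset_closure hlt)
  have hmin : IsLocalMin f x := by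
    rw [mem_closure_iff_frequently, not_frequently] at hx
    filter_upwards [hx] with y hy
    exact h0 ▸ not_lt.mp hy
  exact hcrit x h0 hmin.fderiv_eq_zero

theorem frontier_interior_setOf_nonpos_eq (hf : Continuous f)
    (hcrit : ∀ x, f x = 0 → fderiv ℝ f x ≠ 0) :
    frontier (interior {x | f x ≤ 0}) = {x | f x = 0} := by
  rw [interior_setOf_nonpos_eq hf hcrit, (isOpen_lt hf continuous_const).frontier_eq,
    closure_setOf_neg_eq hf hcrit]
  ext x
  simp only [Set.mem_sdiff, mem_ofPred_eq, not_lt, le_antisymm_iff]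

end NoncriticalZeros

/-- If `g : ℝ² → ℝ` is continuously differentiable and `∇g x ≠ 0`
whenever `g x = 0`, then the frontier of `Ω_g = interior {x | g x ≤ 0}` equals the
zero level set `{x | g x = 0}`. -/
theorem frontier_sublevel_eq_zero_level
    (g : EuclideanSpace ℝ (Fin 2) → ℝ) (hg : ContDiff ℝ 1 g)
    (hgrad : ∀ x : EuclideanSpace ℝ (Fin 2), g x = 0 → gradient g x ≠ 0) :
    frontier (interior {x : EuclideanSpace ℝ (Fin 2) | g x ≤ 0}) =
      {x : EuclideanSpace ℝ (Fin 2) | g x = 0} := by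
  refine frontier_interior_setOf_nonpos_eq hg.continuous fun x h0 hderiv => hgrad x h0 ?_
  rw [gradient, hderiv, map_zero]
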